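/- Let $X$ be a compact manifold and $\varphi, \varphi'$ smooth functions on a neighborhood of $X$ in a manifold $M$ with $\|\varphi - \varphi'\|_{C^2} \le \varepsilon$, suppose $\varphi \ge 0$ vanishes exactly to second order along $X$, and suppose $\varphi' = \varphi$ on $X$ and $d\varphi' = d\varphi$ on $X$. Then there is a constant $c_1 > 0$ independent of $\varepsilon$ such that, on a sufficiently small neighborhood of $X$, $(1 - c_1\varepsilon)\varphi \le \varphi' \le (1 + c_1\varepsilon)\varphi$ for all sufficiently small $\varepsilon > 0$. -/

import Mathlib

open Metric

/-- Comparison estimate between two potentials vanishing exactly to second order along a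
compact set `X`: if `φ' = φ` and `dφ' = dφ` on `X` and `|φ - φ'|_{C²} ≤ ε`, then
`(1 - c₁ε) φ ≤ φ' ≤ (1 + c₁ε) φ` near `X` for all small `ε`, with `c₁` independent of `ε`. -/
theorem potential_comparison {N : ℕ} (X U : Set (EuclideanSpace ℝ (Fin N)))
    (hX : IsCompact X) (hXne : X.Nonempty) (hU : IsOpen U) (hXU : X ⊆ U)
    (φ : EuclideanSpace ℝ (Fin N) → ℝ) (hφ : ContDiffOn ℝ (⊤ : ℕ∞) φ U)
    (hφ0 : ∀ x ∈ U, 0 ≤ φ x) (hφX : ∀ x ∈ X, φ x = 0)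
    (hdφX : ∀ x ∈ X, fderiv ℝ φ x = 0)
    -- `φ` vanishes exactly to second order along `X`: nondegenerate normal Hessian
    (hquad : ∃ δ₀ c₀ : ℝ, 0 < δ₀ ∧ 0 < c₀ ∧ ∀ x ∈ U, infDist x X < δ₀ →
      c₀ * infDist x X ^ 2 ≤ φ x) :
    ∃ c₁ : ℝ, 0 < c₁ ∧ ∃ ε₀ : ℝ, 0 < ε₀ ∧
      ∀ ε : ℝ, 0 < ε → ε < ε₀ →
        ∀ φ' : EuclideanSpace ℝ (Fin N) → ℝ, ContDiffOn ℝ (⊤ : ℕ∞) φ' U →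
          -- `C²` closeness on `U`
          (∀ x ∈ U, |φ x - φ' x| ≤ ε) →
          (∀ x ∈ U, ‖fderiv ℝ (fun y => φ y - φ' y) x‖ ≤ ε) →
          (∀ x ∈ U, ‖iteratedFDeriv ℝ 2 (fun y => φ y - φ' y) x‖ ≤ ε) →
          -- agreement to first order on `X`
          (∀ x ∈ X, φ' x = φ x) → (∀ x ∈ X, fderiv ℝ φ' x = fderiv ℝ φ x) →
          ∃ δ : ℝ, 0 < δ ∧ ∀ x ∈ U, infDist x X < δ →
            (1 - c₁ * ε) * φ x ≤ φ' x ∧ φ' x ≤ (1 + c₁ * ε) * φ x := by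
  obtain ⟨δ₀, c₀, hδ₀, hc₀, hq⟩ := hquad
  obtain ⟨δ', hδ'pos, hthick⟩ := hX.exists_thickening_subset_open hU hXU
  refine ⟨c₀⁻¹, by positivity, 1, one_pos, ?_⟩
  intro ε hε hε1 φ' hφ' h0 h1 h2 hval hder
  refine ⟨min δ₀ δ', lt_min hδ₀ hδ'pos, ?_⟩
  intro x hxU hxd
  -- nearest point
  obtain ⟨y, hyX, hyd⟩ := hX.exists_infDist_eq_dist hXne x
  have hdlt₀ : dist x y < δ₀ := by rw [← hyd]; exact lt_of_lt_of_le hxd (min_le_left _ _)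
  have hdlt' : dist x y < δ' := by rw [← hyd]; exact lt_of_lt_of_le hxd (min_le_right _ _)
  set g : EuclideanSpace ℝ (Fin N) → ℝ := fun z => φ z - φ' z with hg
  have hgC : ContDiffOn ℝ (⊤ : ℕ∞) g U := hφ.sub hφ'
  have hBU : ball y δ' ⊆ U := fun z hz =>
    hthick (ball_subset_thickening hyX δ' hz)
  have hdiffAt : ∀ z ∈ U, DifferentiableAt ℝ g z := fun z hz =>
    (hgC.contDiffAt (hU.mem_nhds hz)).differentiableAt (by simp)
  have hg'C : ContDiffOn ℝ (⊤ : ℕ∞) (fderiv ℝ g) U := hgC.fderiv_of_isOpen hU (by simp)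
  have hdiff2At : ∀ z ∈ U, DifferentiableAt ℝ (fderiv ℝ g) z := fun z hz =>
    (hg'C.contDiffAt (hU.mem_nhds hz)).differentiableAt (by simp)
  -- second derivative bound
  have hHess : ∀ z ∈ U, ‖fderiv ℝ (fderiv ℝ g) z‖ ≤ ε := by
    intro z hz
    calc ‖fderiv ℝ (fderiv ℝ g) z‖
        = ‖iteratedFDeriv ℝ 0 (fderiv ℝ (fderiv ℝ g)) z‖ := (norm_iteratedFDeriv_zero (f := fderiv ℝ (fderiv ℝ g)) (x := z)).symm
      _ = ‖iteratedFDeriv ℝ 1 (fderiv ℝ g) z‖ := norm_iteratedFDeriv_fderiv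
      _ = ‖iteratedFDeriv ℝ 2 g z‖ := norm_iteratedFDeriv_fderiv
      _ ≤ ε := h2 z hz
  have hyU : y ∈ U := hXU hyX
  -- `g` and its derivative vanish at `y`
  have hgy : g y = 0 := by simp [hg, hval y hyX]
  have hg'y : fderiv ℝ g y = 0 := by
    have : fderiv ℝ g y = fderiv ℝ φ y - fderiv ℝ φ' y :=
      fderiv_sub ((hφ.contDiffAt (hU.mem_nhds hyU)).differentiableAt (by simp))
        ((hφ'.contDiffAt (hU.mem_nhds hyU)).differentiableAt (by simp))
    rw [this, hder y hyX, sub_self]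
  -- first derivative bound on the ball
  have hA : ∀ z ∈ ball y δ', ‖fderiv ℝ g z‖ ≤ ε * dist z y := by
    intro z hz
    have hy' : y ∈ ball y δ' := mem_ball_self hδ'pos
    have := (convex_ball y δ').norm_image_sub_le_of_norm_hasFDerivWithin_le
      (f := fderiv ℝ g) (f' := fun w => fderiv ℝ (fderiv ℝ g) w) (C := ε)
      (fun w hw => (hdiff2At w (hBU hw)).hasFDerivAt.hasFDerivWithinAt)
      (fun w hw => hHess w (hBU hw)) hy' hz
    rw [hg'y, sub_zero, ← dist_eq_norm] at this
    exact this
  -- value bound along the segment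
  have hxB : x ∈ ball y δ' := mem_ball.2 hdlt'
  have hseg : segment ℝ y x ⊆ ball y δ' :=
    (convex_ball y δ').segment_subset (mem_ball_self hδ'pos) hxB
  have hB : |g x| ≤ ε * dist x y * dist x y := by
    have := (convex_segment y x).norm_image_sub_le_of_norm_hasFDerivWithin_le
      (f := g) (f' := fun w => fderiv ℝ g w) (C := ε * dist x y)
      (fun w hw => (hdiffAt w (hBU (hseg hw))).hasFDerivAt.hasFDerivWithinAt)
      (fun w hw => by
        have h1 := hA w (hseg hw)
        have h2 : dist w y ≤ dist x y := by
          have h4 := dist_add_dist_of_mem_segment hw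
          have h3 : 0 ≤ dist w x := dist_nonneg
          rw [dist_comm y x] at h4
          rw [dist_comm w y]
          linarith
        calc ‖fderiv ℝ g w‖ ≤ ε * dist w y := h1
          _ ≤ ε * dist x y := by nlinarith)
      (left_mem_segment ℝ y x) (right_mem_segment ℝ y x)
    rw [hgy, sub_zero, ← dist_eq_norm x y] at this
    rwa [Real.norm_eq_abs] at this
  -- conclude
  have hquadx : c₀ * dist x y ^ 2 ≤ φ x := by
    have := hq x hxU (by rw [hyd]; exact hdlt₀)
    rwa [hyd] at this
  have habs : |φ x - φ' x| ≤ ε * dist x y ^ 2 := by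
    have : ε * dist x y * dist x y = ε * dist x y ^ 2 := by ring
    rw [← this]; exact hB
  obtain ⟨hl, hr⟩ := abs_le.1 habs
  have hd2 : (0:ℝ) ≤ dist x y ^ 2 := by positivity
  constructor
  · have h5 : c₀ * (φ x - φ' x) ≤ ε * φ x := by nlinarith
    have h4 := mul_le_mul_of_nonneg_left h5 (inv_nonneg.2 hc₀.le)
    rw [← mul_assoc, inv_mul_cancel₀ hc₀.ne', one_mul] at h4
    rw [sub_mul, one_mul]
    linarith [mul_assoc c₀⁻¹ ε (φ x)]
  · have h5 : c₀ * (φ' x - φ x) ≤ ε * φ x := by nlinarith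
    have h4 := mul_le_mul_of_nonneg_left h5 (inv_nonneg.2 hc₀.le)
    rw [← mul_assoc, inv_mul_cancel₀ hc₀.ne', one_mul] at h4
    rw [add_mul, one_mul]
    linarith [mul_assoc c₀⁻¹ ε (φ x)]
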